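/- Let F : ℝ^b × ℝ^a → ℝ^b be λ-stable with λ ∈ (0,1) and κ-Lipschitz in its input, let W_c be an m × b real matrix and b_c ∈ ℝ^m, and for an input sequence x of length T define the belief vector p(T;x) = softmax(W_c·h(T;x) + b_c), where h(t;x) are the hidden states with zero initial state. Then for any two input sequences x and x̃ of length T, ‖p(T;x) − p(T;x̃)‖ ≤ η·‖x − x̃‖_ℓ∞ with η = κ·‖W_c‖/(1 − λ). -/

import Mathlib

/-! The hidden-state gap `dₜ = ‖h t - h̃ t‖` obeys `dₜ₊₁ ≤ λ dₜ + κ M`, where `M` is the ℓ∞ gap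
of the inputs, so it never exceeds the fixed point `κ M / (1 - λ)` of this recursion. The
affine readout stretches the gap by at most `‖W_c‖`, and softmax is 1-Lipschitz since its
Jacobian `diag p - p pᵀ` at a probability vector `p` has operator norm at most 1. -/

/-- The softmax map on `ℝ^m`, `softmax(q)_i = exp(q_i)/∑_j exp(q_j)`. -/
noncomputable def softmax {m : ℕ} (q : EuclideanSpace ℝ (Fin m)) : EuclideanSpace ℝ (Fin m) :=
  (WithLp.equiv 2 (Fin m → ℝ)).symm
    (fun i => Real.exp (q i) / ∑ j : Fin m, Real.exp (q j))

open Finset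

theorem le_div_one_sub_of_le_mul_add {d : ℕ → ℝ} {lam c : ℝ} {T : ℕ} (hlam0 : 0 ≤ lam)
    (hlam1 : lam < 1) (hd0 : d 0 ≤ c / (1 - lam)) (hstep : ∀ t < T, d (t + 1) ≤ lam * d t + c) :
    ∀ t ≤ T, d t ≤ c / (1 - lam) := by
  intro t
  induction t with
  | zero => exact fun _ => hd0
  | succ t ih =>
    intro ht
    have h1 : 0 < 1 - lam := by linarith
    calc d (t + 1) ≤ lam * d t + c := hstep t ht
      _ ≤ lam * (c / (1 - lam)) + c := by gcongr; exact ih (by omega)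
      _ = c / (1 - lam) := by field_simp; ring

section RNN

variable {E U : Type*} [SeminormedAddCommGroup E] [SeminormedAddCommGroup U]

theorem norm_sub_le_of_contracting_of_lipschitz {F : E → U → E} {lam kappa : ℝ}
    (hstable : ∀ h h' u, ‖F h u - F h' u‖ ≤ lam * ‖h - h'‖)
    (hlip : ∀ h u u', ‖F h u - F h u'‖ ≤ kappa * ‖u - u'‖) (h h' : E) (u u' : U) :
    ‖F h u - F h' u'‖ ≤ lam * ‖h - h'‖ + kappa * ‖u - u'‖ :=
  calc ‖F h u - F h' u'‖ ≤ ‖F h u - F h' u‖ + ‖F h' u - F h' u'‖ :=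
        norm_sub_le_norm_sub_add_norm_sub _ _ _
    _ ≤ lam * ‖h - h'‖ + kappa * ‖u - u'‖ := add_le_add (hstable _ _ _) (hlip _ _ _)

theorem norm_sub_le_of_contracting_recurrence {F : E → U → E} {lam kappa M : ℝ} (hlam0 : 0 ≤ lam)
    (hlam1 : lam < 1) (hkappa : 0 ≤ kappa) (hM : 0 ≤ M)
    (hstable : ∀ h h' u, ‖F h u - F h' u‖ ≤ lam * ‖h - h'‖)
    (hlip : ∀ h u u', ‖F h u - F h u'‖ ≤ kappa * ‖u - u'‖)
    {x x' : ℕ → U} {h h' : ℕ → E} (h0 : h 0 = h' 0)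
    (hrec : ∀ t, h (t + 1) = F (h t) (x (t + 1)))
    (hrec' : ∀ t, h' (t + 1) = F (h' t) (x' (t + 1)))
    {T : ℕ} (hx : ∀ t ∈ Icc 1 T, ‖x t - x' t‖ ≤ M) :
    ‖h T - h' T‖ ≤ kappa * M / (1 - lam) := by
  refine le_div_one_sub_of_le_mul_add (d := fun t => ‖h t - h' t‖) hlam0 hlam1 ?_ ?_ T le_rfl
  · have : 0 < 1 - lam := by linarith
    simp only [h0, sub_self, norm_zero]
    positivity
  · intro t ht
    rw [hrec, hrec']
    grw [norm_sub_le_of_contracting_of_lipschitz hstable hlip,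
      hx (t + 1) (mem_Icc.2 ⟨by omega, ht⟩)]

end RNN

theorem sum_sq_mul_sub_sum_mul_le_sum_sq {ι : Type*} [Fintype ι] {p : ι → ℝ} (v : ι → ℝ)
    (hp0 : ∀ i, 0 ≤ p i) (hp1 : ∀ i, p i ≤ 1) (hp : ∑ i, p i ≤ 1) :
    ∑ i, (p i * (v i - ∑ j, p j * v j)) ^ 2 ≤ ∑ i, v i ^ 2 := by
  obtain ⟨c, hc⟩ : ∃ c, c = ∑ j, p j * v j := ⟨_, rfl⟩
  rw [← hc]
  calc ∑ i, (p i * (v i - c)) ^ 2 ≤ ∑ i, p i * (v i - c) ^ 2 := by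
        gcongr with i; rw [mul_pow]; gcongr; nlinarith [hp0 i, hp1 i]
    _ = ∑ i, p i * v i ^ 2 - 2 * c * ∑ i, p i * v i + c ^ 2 * ∑ i, p i := by
        rw [mul_sum, mul_sum, ← sum_sub_distrib, ← sum_add_distrib]
        exact sum_congr rfl fun i _ => by ring
    _ ≤ ∑ i, p i * v i ^ 2 := by
        rw [← hc]; nlinarith [mul_le_mul_of_nonneg_left hp (sq_nonneg c)]
    _ ≤ ∑ i, v i ^ 2 := by gcongr with i; nlinarith [hp1 i, sq_nonneg (v i)]

section Softmax

variable {m : ℕ}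

theorem softmax_apply (q : EuclideanSpace ℝ (Fin m)) (i : Fin m) :
    softmax q i = Real.exp (q i) / ∑ j, Real.exp (q j) := rfl

theorem sum_exp_pos (q : EuclideanSpace ℝ (Fin m)) (i : Fin m) : 0 < ∑ j, Real.exp (q j) :=
  sum_pos (fun _ _ => Real.exp_pos _) ⟨i, mem_univ i⟩

theorem softmax_nonneg (q : EuclideanSpace ℝ (Fin m)) (i : Fin m) : 0 ≤ softmax q i :=
  div_nonneg (Real.exp_nonneg _) (sum_exp_pos q i).le

theorem softmax_le_one (q : EuclideanSpace ℝ (Fin m)) (i : Fin m) : softmax q i ≤ 1 :=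
  (div_le_one (sum_exp_pos q i)).2 <|
    single_le_sum (fun j _ => (Real.exp_pos (q j)).le) (mem_univ i)

theorem sum_softmax_le_one (q : EuclideanSpace ℝ (Fin m)) : ∑ i, softmax q i ≤ 1 := by
  simp only [softmax_apply, ← sum_div]
  exact div_self_le_one _

noncomputable def softmaxJacobian (q : EuclideanSpace ℝ (Fin m)) :
    EuclideanSpace ℝ (Fin m) →L[ℝ] EuclideanSpace ℝ (Fin m) :=
  (PiLp.continuousLinearEquiv 2 ℝ (fun _ : Fin m => ℝ)).symm.toContinuousLinearMap ∘L
    ContinuousLinearMap.pi fun i =>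
      softmax q i • (EuclideanSpace.proj i - ∑ j, softmax q j • EuclideanSpace.proj j)

theorem softmaxJacobian_apply (q v : EuclideanSpace ℝ (Fin m)) (i : Fin m) :
    softmaxJacobian q v i = softmax q i * (v i - ∑ j, softmax q j * v j) := by
  simp [softmaxJacobian]

theorem norm_softmaxJacobian_le_one (q : EuclideanSpace ℝ (Fin m)) : ‖softmaxJacobian q‖ ≤ 1 := by
  refine ContinuousLinearMap.opNorm_le_bound _ zero_le_one fun v => ?_
  rw [one_mul, EuclideanSpace.norm_eq, EuclideanSpace.norm_eq]
  refine Real.sqrt_le_sqrt ?_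
  simp only [Real.norm_eq_abs, sq_abs, softmaxJacobian_apply]
  exact sum_sq_mul_sub_sum_mul_le_sum_sq _ (softmax_nonneg q) (softmax_le_one q)
    (sum_softmax_le_one q)

theorem hasFDerivAt_softmax_apply (q : EuclideanSpace ℝ (Fin m)) (i : Fin m) :
    HasFDerivAt (fun q : EuclideanSpace ℝ (Fin m) => softmax q i)
      (softmax q i • (EuclideanSpace.proj i - ∑ j, softmax q j • EuclideanSpace.proj (𝕜 := ℝ) j))
      q := by
  have hexp : ∀ j, HasFDerivAt (fun q : EuclideanSpace ℝ (Fin m) => Real.exp (q j))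
      (Real.exp (q j) • EuclideanSpace.proj j) q :=
    fun j => (EuclideanSpace.proj (𝕜 := ℝ) j).hasFDerivAt.exp
  have hinv := (hasDerivAt_inv (sum_exp_pos q i).ne').comp_hasFDerivAt q
    (HasFDerivAt.fun_sum fun j _ => hexp j)
  have hsoftmax : (fun q : EuclideanSpace ℝ (Fin m) => softmax q i) =
      fun q => Real.exp (q i) * (∑ j, Real.exp (q j))⁻¹ := by
    simp only [softmax_apply, div_eq_mul_inv]
  rw [hsoftmax]
  refine ((hexp i).mul hinv).congr_fderiv ?_
  ext v
  have hS := (sum_exp_pos q i).ne'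
  simp only [neg_smul, smul_neg, Function.comp_apply, add_apply, neg_apply, smul_apply,
    _root_.sum_apply, sub_apply, PiLp.proj_apply, smul_eq_mul, softmax_apply,
    div_mul_eq_mul_div, ← sum_div]
  field_simp
  ring

theorem hasFDerivAt_softmax (q : EuclideanSpace ℝ (Fin m)) :
    HasFDerivAt softmax (softmaxJacobian q) q := by
  rw [← hasFDerivWithinAt_univ, hasFDerivWithinAt_piLp]
  exact fun i => (hasFDerivAt_softmax_apply q i).hasFDerivWithinAt

theorem lipschitzWith_one_softmax : LipschitzWith 1 (softmax (m := m)) :=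
  lipschitzWith_of_nnnorm_fderiv_le (fun q => (hasFDerivAt_softmax q).differentiableAt)
    fun q => by
      rw [(hasFDerivAt_softmax q).fderiv, ← NNReal.coe_le_coe]
      exact norm_softmaxJacobian_le_one q

end Softmax

/-- For the belief vectors `p(T;x) = softmax(W_c·h(T;x) + b_c)` of a classifier
built on a λ-stable, κ-input-Lipschitz RNN with zero initial states,
`‖p(T;x) − p(T;x̃)‖ ≤ η·‖x − x̃‖_ℓ∞` with `η = κ·‖W_c‖/(1 − λ)`. -/
theorem stmt_6 {a b m : ℕ}
    (F : EuclideanSpace ℝ (Fin b) → EuclideanSpace ℝ (Fin a) → EuclideanSpace ℝ (Fin b))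
    (lam kappa : ℝ) (hlam0 : 0 < lam) (hlam1 : lam < 1) (hkappa : 0 < kappa)
    (hstable : ∀ (h h' : EuclideanSpace ℝ (Fin b)) (u : EuclideanSpace ℝ (Fin a)),
      ‖F h u - F h' u‖ ≤ lam * ‖h - h'‖)
    (hlip : ∀ (h : EuclideanSpace ℝ (Fin b)) (u u' : EuclideanSpace ℝ (Fin a)),
      ‖F h u - F h u'‖ ≤ kappa * ‖u - u'‖)
    (Wc : EuclideanSpace ℝ (Fin b) →L[ℝ] EuclideanSpace ℝ (Fin m))
    (bc : EuclideanSpace ℝ (Fin m))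
    (T : ℕ) (hT : 1 ≤ T)
    (x xt : ℕ → EuclideanSpace ℝ (Fin a))
    (h ht : ℕ → EuclideanSpace ℝ (Fin b))
    (h0 : h 0 = 0) (ht0 : ht 0 = 0)
    (hrec : ∀ t, h (t + 1) = F (h t) (x (t + 1)))
    (htrec : ∀ t, ht (t + 1) = F (ht t) (xt (t + 1))) :
    ‖softmax (Wc (h T) + bc) - softmax (Wc (ht T) + bc)‖ ≤
      (kappa * ‖Wc‖ / (1 - lam)) *
        (Finset.Icc 1 T).sup' (Finset.nonempty_Icc.mpr hT)
          (fun s => ‖x s - xt s‖) := by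
  set M := (Icc 1 T).sup' (nonempty_Icc.mpr hT) fun s => ‖x s - xt s‖
  have hx : ∀ t ∈ Icc 1 T, ‖x t - xt t‖ ≤ M := fun t ht => le_sup' (fun s => ‖x s - xt s‖) ht
  have hM : 0 ≤ M := (norm_nonneg _).trans (hx 1 (mem_Icc.2 ⟨le_rfl, hT⟩))
  have hidden : ‖h T - ht T‖ ≤ kappa * M / (1 - lam) :=
    norm_sub_le_of_contracting_recurrence hlam0.le hlam1 hkappa.le hM hstable hlip
      (h0.trans ht0.symm) hrec htrec hx
  calc ‖softmax (Wc (h T) + bc) - softmax (Wc (ht T) + bc)‖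
      ≤ ‖(Wc (h T) + bc) - (Wc (ht T) + bc)‖ := by
        simpa using lipschitzWith_one_softmax.norm_sub_le (Wc (h T) + bc) (Wc (ht T) + bc)
    _ = ‖Wc (h T - ht T)‖ := by rw [map_sub, add_sub_add_right_eq_sub]
    _ ≤ ‖Wc‖ * ‖h T - ht T‖ := Wc.le_opNorm _
    _ ≤ ‖Wc‖ * (kappa * M / (1 - lam)) := by gcongr
    _ = kappa * ‖Wc‖ / (1 - lam) * M := by ring
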